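/- arXiv:2201.11931 — 4 statements merged into one kernel-verified Lean document; each statement's English description precedes it below -/
import Mathlib

section
/- Let Ψ and Ψ' be the normalized decision stump vectors in ℝ^n associated with an internal node t of a decision tree and with a node t' that is a strict descendant of one of t's children (or with a potential split inside a leaf descendant). Then Ψ and Ψ' are orthogonal: ⟨Ψ, Ψ'⟩ = 0. -/
open Finset

/-- Orthogonality of normalized decision stump vectors: if `Ψ` is the stump associated
with a node `t` split into children `tL, tR`, and `Ψ'` is the stump associated with a
node `t'` (split into `tL', tR'`) that lies entirely inside one child of `t`
(say `t' ⊆ tL`), then `⟨Ψ, Ψ'⟩ = 0`. -/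
theorem stump_vectors_orthogonal {ι : Type*} [Fintype ι] [DecidableEq ι]
    (tL tR tL' tR' : Finset ι)
    (hd : Disjoint tL tR) (hL : tL.Nonempty) (hR : tR.Nonempty)
    (hd' : Disjoint tL' tR') (hL' : tL'.Nonempty) (hR' : tR'.Nonempty)
    (hsub : tL' ∪ tR' ⊆ tL)
    (Ψ Ψ' : ι → ℝ)
    (hΨ : ∀ i, Ψ i =
      if i ∈ tL then
        (tR.card : ℝ) / Real.sqrt (((tL ∪ tR).card : ℝ) * (tL.card : ℝ) * (tR.card : ℝ))
      else if i ∈ tR then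
        -(tL.card : ℝ) / Real.sqrt (((tL ∪ tR).card : ℝ) * (tL.card : ℝ) * (tR.card : ℝ))
      else 0)
    (hΨ' : ∀ i, Ψ' i =
      if i ∈ tL' then
        (tR'.card : ℝ) / Real.sqrt (((tL' ∪ tR').card : ℝ) * (tL'.card : ℝ) * (tR'.card : ℝ))
      else if i ∈ tR' then
        -(tL'.card : ℝ) / Real.sqrt (((tL' ∪ tR').card : ℝ) * (tL'.card : ℝ) * (tR'.card : ℝ))
      else 0) :
    ∑ i, Ψ i * Ψ' i = 0 := by
  set c := (tR.card : ℝ) / Real.sqrt (((tL ∪ tR).card : ℝ) * (tL.card : ℝ) * (tR.card : ℝ)) with hc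
  have h1 : ∑ i, Ψ i * Ψ' i = ∑ i ∈ tL' ∪ tR', Ψ i * Ψ' i := by
    rw [← Finset.sum_subset (Finset.subset_univ _)]
    intro i _ hi
    rw [hΨ' i]
    simp only [Finset.mem_union, not_or] at hi
    simp [hi.1, hi.2]
  have hcst : ∀ i ∈ tL' ∪ tR', Ψ i = c := fun i hi => by
    rw [hΨ i, if_pos (hsub hi)]
  have e1 : ∑ i ∈ tL', Ψ i * Ψ' i = (tL'.card : ℝ) *
      (c * ((tR'.card : ℝ) / Real.sqrt (((tL' ∪ tR').card : ℝ) * (tL'.card : ℝ) * (tR'.card : ℝ)))) := by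
    rw [Finset.sum_congr rfl (fun i hi => by
      rw [hcst i (Finset.mem_union_left _ hi), hΨ' i, if_pos hi]),
      Finset.sum_const, nsmul_eq_mul]
  have e2 : ∑ i ∈ tR', Ψ i * Ψ' i = (tR'.card : ℝ) *
      (c * (-(tL'.card : ℝ) / Real.sqrt (((tL' ∪ tR').card : ℝ) * (tL'.card : ℝ) * (tR'.card : ℝ)))) := by
    rw [Finset.sum_congr rfl (fun i hi => by
      rw [hcst i (Finset.mem_union_right _ hi), hΨ' i,
        if_neg (fun h => Finset.disjoint_left.mp hd' h hi), if_pos hi]),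
      Finset.sum_const, nsmul_eq_mul]
  rw [h1, Finset.sum_union hd', e1, e2]
  ring
end

section
/- Let A be a symmetric positive semidefinite n×n real matrix, and let x be a vector in the column space of A such that xᵀA†x ≠ 1, where A† is the Moore–Penrose pseudoinverse, and suppose x also lies in the column space of A − xxᵀ. Then (A − xxᵀ)† = A† + (A† x xᵀ A†)/(1 − xᵀA†x). -/
open Matrix

/-- `B` satisfies the four Penrose conditions for being the Moore–Penrose
pseudoinverse of `A`. -/
def IsMoorePenrose {m n : Type*} [Fintype m] [Fintype n]
    (A : Matrix m n ℝ) (B : Matrix n m ℝ) : Prop :=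
  A * B * A = A ∧ B * A * B = B ∧ (A * B)ᵀ = A * B ∧ (B * A)ᵀ = B * A

lemma mp_unique {n : ℕ} (M B C : Matrix (Fin n) (Fin n) ℝ)
    (hB : IsMoorePenrose M B) (hC : IsMoorePenrose M C) : B = C := by
  obtain ⟨hB1, hB2, hB3, hB4⟩ := hB
  obtain ⟨hC1, hC2, hC3, hC4⟩ := hC
  have hMB : M * B = M * C := by
    calc M * B = (M * B)ᵀ := hB3.symm
      _ = ((M * C * M) * B)ᵀ := by rw [hC1]
      _ = ((M * C) * (M * B))ᵀ := by simp only [Matrix.mul_assoc]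
      _ = (M * B)ᵀ * (M * C)ᵀ := by rw [Matrix.transpose_mul]
      _ = (M * B) * (M * C) := by rw [hB3, hC3]
      _ = (M * B * M) * C := by simp only [Matrix.mul_assoc]
      _ = M * C := by rw [hB1]
  have hBM : B * M = C * M := by
    calc B * M = (B * M)ᵀ := hB4.symm
      _ = (B * (M * C * M))ᵀ := by rw [hC1]
      _ = ((B * M) * (C * M))ᵀ := by simp only [Matrix.mul_assoc]
      _ = (C * M)ᵀ * (B * M)ᵀ := by rw [Matrix.transpose_mul]
      _ = (C * M) * (B * M) := by rw [hB4, hC4]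
      _ = C * (M * B * M) := by simp only [Matrix.mul_assoc]
      _ = C * M := by rw [hB1]
  calc B = B * M * B := hB2.symm
    _ = C * M * B := by rw [hBM]
    _ = C * (M * B) := by rw [Matrix.mul_assoc]
    _ = C * (M * C) := by rw [hMB]
    _ = C * M * C := by rw [Matrix.mul_assoc]
    _ = C := hC2

lemma mp_transpose {n : ℕ} {M B : Matrix (Fin n) (Fin n) ℝ}
    (h : IsMoorePenrose M B) : IsMoorePenrose Mᵀ Bᵀ := by
  obtain ⟨h1, h2, h3, h4⟩ := h
  refine ⟨?_, ?_, ?_, ?_⟩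
  · have e : Mᵀ * Bᵀ * Mᵀ = (M * B * M)ᵀ := by
      simp only [Matrix.transpose_mul, Matrix.mul_assoc]
    rw [e, h1]
  · have e : Bᵀ * Mᵀ * Bᵀ = (B * M * B)ᵀ := by
      simp only [Matrix.transpose_mul, Matrix.mul_assoc]
    rw [e, h2]
  · rw [← Matrix.transpose_mul, Matrix.transpose_transpose]; exact h4.symm
  · rw [← Matrix.transpose_mul, Matrix.transpose_transpose]; exact h3.symm

lemma mul_vecMulVec' {n : ℕ} (A : Matrix (Fin n) (Fin n) ℝ) (x y : Fin n → ℝ) :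
    A * vecMulVec x y = vecMulVec (A *ᵥ x) y := by
  ext i j
  simp [Matrix.mul_apply, Matrix.vecMulVec_apply, Matrix.mulVec, dotProduct,
    Finset.sum_mul, mul_assoc]

lemma vecMulVec_mul' {n : ℕ} (A : Matrix (Fin n) (Fin n) ℝ) (x y : Fin n → ℝ) :
    vecMulVec x y * A = vecMulVec x (Aᵀ *ᵥ y) := by
  ext i j
  simp [Matrix.mul_apply, Matrix.vecMulVec_apply, Matrix.mulVec, dotProduct,
    Finset.mul_sum, mul_comm, mul_assoc, mul_left_comm]

lemma vecMulVec_mul_vecMulVec {n : ℕ} (x y z w : Fin n → ℝ) :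
    vecMulVec x y * vecMulVec z w = (y ⬝ᵥ z) • vecMulVec x w := by
  ext i j
  simp only [Matrix.mul_apply, Matrix.vecMulVec_apply, Matrix.smul_apply,
    dotProduct, Finset.sum_mul, smul_eq_mul]
  exact Finset.sum_congr rfl fun k _ => by ring

lemma vecMulVec_transpose' {n : ℕ} (x y : Fin n → ℝ) :
    (vecMulVec x y)ᵀ = vecMulVec y x := by
  ext i j; simp [Matrix.vecMulVec_apply, mul_comm]

/-- Rank-one downdate Sherman–Morrison formula for pseudoinverses: if `A` is symmetric
positive semidefinite, `x` lies in the column spaces of both `A` and `A − xxᵀ`,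
`A†` is the Moore–Penrose pseudoinverse of `A`, `B` is that of `A − xxᵀ`, and
`xᵀA†x ≠ 1`, then `(A − xxᵀ)† = A† + (A† x xᵀ A†)/(1 − xᵀA†x)`. -/
theorem sherman_morrison_pseudoinverse {n : ℕ}
    (A Ad B : Matrix (Fin n) (Fin n) ℝ) (x : Fin n → ℝ)
    (hPSD : A.PosSemidef)
    (hAd : IsMoorePenrose A Ad)
    (hB : IsMoorePenrose (A - vecMulVec x x) B)
    (hxA : ∃ v, A *ᵥ v = x)
    (hxB : ∃ v, (A - vecMulVec x x) *ᵥ v = x)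
    (hne : x ⬝ᵥ Ad *ᵥ x ≠ 1) :
    B = Ad + (1 - x ⬝ᵥ Ad *ᵥ x)⁻¹ • (Ad * vecMulVec x x * Ad) := by
  have hA1 := hAd.1
  have hA2 := hAd.2.1
  have hA3 := hAd.2.2.1
  have hA4 := hAd.2.2.2
  have hAsym : Aᵀ = A := hPSD.isHermitian.eq
  -- Ad is symmetric
  have hAdT : IsMoorePenrose A Adᵀ := by
    have := mp_transpose hAd
    rwa [hAsym] at this
  have hAdsym : Adᵀ = Ad := mp_unique A Adᵀ Ad hAdT hAd
  -- commutation
  have hcomm : Ad * A = A * Ad := by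
    calc Ad * A = (Ad * A)ᵀ := hA4.symm
      _ = Aᵀ * Adᵀ := Matrix.transpose_mul _ _
      _ = A * Ad := by rw [hAsym, hAdsym]
  -- projection fixes x
  obtain ⟨v, hv⟩ := hxA
  have hPx : (A * Ad) *ᵥ x = x := by
    rw [← hv, Matrix.mulVec_mulVec, hA1]
  set s := x ⬝ᵥ Ad *ᵥ x with hs
  set c := (1 - s)⁻¹ with hc
  have hc1 : c * (1 - s) = 1 := inv_mul_cancel₀ (sub_ne_zero.mpr (Ne.symm hne))
  have hcoef : c - 1 - c * s = 0 := by linear_combination hc1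
  set X := vecMulVec x x with hX
  set M := A - X with hM
  set C := Ad + c • (Ad * X * Ad) with hCdef
  have hXsym : Xᵀ = X := vecMulVec_transpose' x x
  have hMsym : Mᵀ = M := by rw [hM, Matrix.transpose_sub, hAsym, hXsym]
  have hCsym : Cᵀ = C := by
    rw [hCdef]
    simp only [Matrix.transpose_add, Matrix.transpose_smul, Matrix.transpose_mul,
      hAdsym, hXsym, Matrix.mul_assoc]
  -- key product computations
  have hXAd : X * Ad = vecMulVec x (Ad *ᵥ x) := by rw [hX, vecMulVec_mul', hAdsym]
  have hdots : (Ad *ᵥ x) ⬝ᵥ x = s := by rw [hs, dotProduct_comm]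
  have hPX : (A * Ad) * X = X := by
    rw [hX, mul_vecMulVec', hPx]
  have hMC : M * C = A * Ad := by
    have expand : M * C = A * Ad + c • ((A * Ad) * X * Ad) - X * Ad
        - c • (X * Ad * (X * Ad)) := by
      rw [hM, hCdef]
      simp only [Matrix.sub_mul, Matrix.add_mul, Matrix.mul_add, Matrix.mul_smul,
        Matrix.smul_mul, smul_sub, smul_add, smul_smul, Matrix.mul_assoc,
        sub_eq_add_neg, neg_add, Matrix.neg_mul, Matrix.mul_neg, neg_smul, smul_neg]
      abel
    rw [expand, hPX, hXAd, vecMulVec_mul_vecMulVec, hdots, smul_smul]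
    have hz : c • (vecMulVec x (Ad *ᵥ x)) - vecMulVec x (Ad *ᵥ x)
        - (c * s) • vecMulVec x (Ad *ᵥ x) = (0 : Matrix (Fin n) (Fin n) ℝ) := by
      calc c • (vecMulVec x (Ad *ᵥ x)) - vecMulVec x (Ad *ᵥ x)
            - (c * s) • vecMulVec x (Ad *ᵥ x)
          = (c - 1 - c * s) • vecMulVec x (Ad *ᵥ x) := by
            rw [sub_smul, sub_smul, one_smul]
        _ = 0 := by rw [hcoef, zero_smul]
    calc A * Ad + c • vecMulVec x (Ad *ᵥ x) - vecMulVec x (Ad *ᵥ x)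
          - (c * s) • vecMulVec x (Ad *ᵥ x)
        = A * Ad + (c • vecMulVec x (Ad *ᵥ x) - vecMulVec x (Ad *ᵥ x)
          - (c * s) • vecMulVec x (Ad *ᵥ x)) := by abel
      _ = A * Ad := by rw [hz, add_zero]
  have hCM : C * M = A * Ad := by
    calc C * M = (Mᵀ * Cᵀ)ᵀ := by rw [Matrix.transpose_mul, Matrix.transpose_transpose,
          Matrix.transpose_transpose]
      _ = (M * C)ᵀ := by rw [hMsym, hCsym]
      _ = (A * Ad)ᵀ := by rw [hMC]
      _ = A * Ad := hA3
  have hCmp : IsMoorePenrose M C := by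
    refine ⟨?_, ?_, ?_, ?_⟩
    · calc M * C * M = (A * Ad) * M := by rw [hMC]
        _ = A * Ad * A - A * Ad * X := by rw [hM, Matrix.mul_sub]
        _ = A - X := by rw [hA1, hPX]
        _ = M := hM.symm
    · calc C * M * C = C * (M * C) := by rw [Matrix.mul_assoc]
        _ = C * (A * Ad) := by rw [hMC]
        _ = Ad * (A * Ad) + c • (Ad * X * (Ad * (A * Ad))) := by
            rw [hCdef]
            simp only [Matrix.add_mul, Matrix.smul_mul, Matrix.mul_assoc]
        _ = Ad + c • (Ad * X * Ad) := by
            rw [← Matrix.mul_assoc, hA2, Matrix.mul_assoc]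
        _ = C := hCdef.symm
    · rw [hMC]; exact hA3
    · rw [hCM]; exact hA3
  exact mp_unique M B C hB hCmp
end

section
/- Let H be an n×n symmetric idempotent matrix with diagonal entries h_i, and define W = D⁻¹(H − diag(H)) where D = diag(1 − min(h_i, 1/2)). Then for each i, (WWᵀ)_{ii} = (h_i − h_i²)/(1 − min(h_i,1/2))² ≤ h_i/(1 − min(h_i,1/2)) ≤ 2h_i, and hence Tr(WWᵀ) ≤ 2·Tr(H). -/
open Matrix

/-- For a symmetric idempotent `H` with diagonal entries `h_i`, and
`W = D⁻¹(H − diag(H))` with `D = diag(1 − min(h_i, 1/2))`: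
`(WWᵀ)_{ii} = (h_i − h_i²)/(1 − min(h_i,1/2))² ≤ h_i/(1 − min(h_i,1/2)) ≤ 2h_i`,
and hence `Tr(WWᵀ) ≤ 2 Tr(H)`. -/
theorem hollow_projection_trace_bound {n : ℕ}
    (H : Matrix (Fin n) (Fin n) ℝ) (hsym : Hᵀ = H) (hidem : H * H = H)
    (h : Fin n → ℝ) (hdiag : ∀ i, h i = H i i)
    (W : Matrix (Fin n) (Fin n) ℝ)
    (hW : ∀ i j, W i j = (if i = j then 0 else H i j) / (1 - min (h i) (1 / 2))) :
    (∀ i, (W * Wᵀ) i i = (h i - h i ^ 2) / (1 - min (h i) (1 / 2)) ^ 2) ∧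
    (∀ i, (W * Wᵀ) i i ≤ h i / (1 - min (h i) (1 / 2))) ∧
    (∀ i, (W * Wᵀ) i i ≤ 2 * h i) ∧
    Matrix.trace (W * Wᵀ) ≤ 2 * Matrix.trace H := by
  have key : ∀ i, ∑ j, (H i j) ^ 2 = h i := by
    intro i
    have h1 : (H * H) i i = H i i := by rw [hidem]
    rw [Matrix.mul_apply] at h1
    rw [hdiag, ← h1]
    apply Finset.sum_congr rfl
    intro j _
    have hji : H j i = H i j := (congrFun (congrFun hsym j) i).symm
    rw [hji]; ring
  have hpos : ∀ i, 0 ≤ h i := by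
    intro i; rw [← key i]; exact Finset.sum_nonneg fun j _ => sq_nonneg _
  have hm : ∀ i, (0:ℝ) < 1 - min (h i) (1/2) := by
    intro i
    have : min (h i) (1/2 : ℝ) ≤ 1/2 := min_le_right _ _
    linarith
  have hsumoff : ∀ i, ∑ j, (if i = j then 0 else H i j) ^ 2 = h i - h i ^ 2 := by
    intro i
    have : ∀ j : Fin n, (if i = j then (0:ℝ) else H i j) ^ 2
        = (H i j) ^ 2 - (if i = j then (H i j) ^ 2 else 0) := by
      intro j; by_cases hij : i = j <;> simp [hij]
    rw [Finset.sum_congr rfl fun j _ => this j, Finset.sum_sub_distrib,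
      Finset.sum_ite_eq Finset.univ i (fun j => (H i j) ^ 2)]
    simp [key i, hdiag i]
  have hoffnn : ∀ i, 0 ≤ h i - h i ^ 2 := by
    intro i; rw [← hsumoff i]; exact Finset.sum_nonneg fun j _ => sq_nonneg _
  have e1 : ∀ i, (W * Wᵀ) i i = (h i - h i ^ 2) / (1 - min (h i) (1 / 2)) ^ 2 := by
    intro i
    rw [Matrix.mul_apply]
    have : ∀ j : Fin n, W i j * Wᵀ j i
        = (if i = j then 0 else H i j) ^ 2 / (1 - min (h i) (1/2)) ^ 2 := by
      intro j
      rw [Matrix.transpose_apply, hW i j]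
      by_cases hij : i = j
      · simp [hij]
      · simp only [if_neg hij, div_mul_div_comm, ← sq, div_pow]
    rw [Finset.sum_congr rfl fun j _ => this j, ← Finset.sum_div, hsumoff i]
  have e2 : ∀ i, (W * Wᵀ) i i ≤ h i / (1 - min (h i) (1 / 2)) := by
    intro i
    rw [e1 i, div_le_div_iff₀ (pow_pos (hm i) 2) (hm i)]
    have h1 : min (h i) (1/2 : ℝ) ≤ h i := min_le_left _ _
    nlinarith [hpos i, hoffnn i, hm i, mul_nonneg (hpos i) (sub_nonneg.2 h1),
      sq_nonneg (1 - min (h i) (1/2))]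
  have e3 : ∀ i, (W * Wᵀ) i i ≤ 2 * h i := by
    intro i
    refine le_trans (e2 i) ?_
    rw [div_le_iff₀ (hm i)]
    have h2 : min (h i) (1/2 : ℝ) ≤ 1/2 := min_le_right _ _
    nlinarith [hpos i]
  refine ⟨e1, e2, e3, ?_⟩
  unfold Matrix.trace
  calc ∑ i, (W * Wᵀ).diag i ≤ ∑ i, 2 * h i := Finset.sum_le_sum fun i _ => e3 i
    _ = 2 * ∑ i, H.diag i := by
        rw [Finset.mul_sum]; exact Finset.sum_congr rfl fun i _ => by
          rw [hdiag i]; rfl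
end

section
/- Disentanglement of impurity decrease: under the additive model f(x) = ∑_{k=1}^K f_k(x_{I_k}) with mutually independent blocks x_{I_k}, suppose the current residual is r = f(x) − g(x) where g = ∑ over fitted trees each splitting features within a single block. Let t be a leaf of a fitted tree splitting only features in I₁, with projection t' onto the I₁ coordinates, and consider a candidate split s of t on a feature m ∈ I₂ at threshold τ. Then the population impurity decrease satisfies Δ(s, t, r) = π₁(t') · Δ(s', t₀, r), where s' is the split of a brand-new root node t₀ on feature m at threshold τ and π₁(t') ≤ 1 is the probability of t'. In particular Δ(s', t₀, r) ≥ Δ(s, t, r), so splitting a new root on the out-of-block feature achieves at least as large an impurity decrease. -/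
open MeasureTheory ProbabilityTheory Set

/-! Since `(A, 1_T)` is independent of `(B, 1_S)`, the mean of `r = A + B` on `T ∩ S` is
`⨍_T A + ⨍_S B`, and the same holds with `Sᶜ` for `S` and with the root `univ` for `T`.
So both splits see the same gap `⨍_S B - ⨍_Sᶜ B` between the means of their two children,
while `μ (T ∩ S) = μ T * μ S` scales the weight of the split of `T` by exactly `μ T ≤ 1`. -/

section

variable {Ω : Type*} [MeasurableSpace Ω] {μ : Measure Ω} {T S : Set Ω} {A B : Ω → ℝ}

theorem setIntegral_inter_of_indepFun {f : Ω → ℝ}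
    (hmT : MeasurableSet T) (hmS : MeasurableSet S) (hf : AEStronglyMeasurable f μ)
    (h : IndepFun (T.indicator f) (S.indicator fun _ => (1 : ℝ)) μ) :
    ∫ ω in T ∩ S, f ω ∂μ = (∫ ω in T, f ω ∂μ) * μ.real S := by
  have hsplit (ω : Ω) :
      (T ∩ S).indicator f ω = T.indicator f ω * S.indicator (fun _ => (1 : ℝ)) ω := by
    simpa using inter_indicator_mul (s := T) (t := S) f (fun _ => (1 : ℝ)) ω
  simp_rw [← integral_indicator (hmT.inter hmS), hsplit]
  rw [h.integral_fun_mul_eq_mul_integral (hf.indicator hmT)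
      (aestronglyMeasurable_const.indicator hmS), integral_indicator hmT]
  exact congrArg _ (integral_indicator_one hmS)

theorem ProbabilityTheory.IndepFun.indicator_compl_right {X : Ω → ℝ × ℝ}
    (h : IndepFun X (fun ω => (B ω, S.indicator (fun _ => (1 : ℝ)) ω)) μ) :
    IndepFun X (fun ω => (B ω, Sᶜ.indicator (fun _ => (1 : ℝ)) ω)) μ := by
  have hcompl : (fun ω => (B ω, Sᶜ.indicator (fun _ => (1 : ℝ)) ω))
      = (fun p : ℝ × ℝ => (p.1, 1 - p.2)) ∘ fun ω => (B ω, S.indicator (fun _ => (1 : ℝ)) ω) := by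
    funext ω
    by_cases hω : ω ∈ S <;> simp [hω]
  rw [hcompl]
  exact h.comp measurable_id (measurable_fst.prodMk (measurable_const.sub measurable_snd))

theorem ProbabilityTheory.IndepFun.indicator_univ_left {Y : Ω → ℝ × ℝ}
    (h : IndepFun (fun ω => (A ω, T.indicator (fun _ => (1 : ℝ)) ω)) Y μ) :
    IndepFun (fun ω => (A ω, (univ : Set Ω).indicator (fun _ => (1 : ℝ)) ω)) Y μ := by
  have huniv : (fun ω => (A ω, (univ : Set Ω).indicator (fun _ => (1 : ℝ)) ω))
      = (fun p : ℝ × ℝ => (p.1, 1)) ∘ fun ω => (A ω, T.indicator (fun _ => (1 : ℝ)) ω) := by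
    funext ω
    simp
  rw [huniv]
  exact h.comp (measurable_fst.prodMk measurable_const) measurable_id

theorem measureReal_inter_of_indepFun (hmT : MeasurableSet T) (hmS : MeasurableSet S)
    (hindep : IndepFun (fun ω => (A ω, T.indicator (fun _ => (1 : ℝ)) ω))
      (fun ω => (B ω, S.indicator (fun _ => (1 : ℝ)) ω)) μ) :
    μ.real (T ∩ S) = μ.real T * μ.real S := by
  have h1 : IndepFun (T.indicator fun _ => (1 : ℝ)) (S.indicator fun _ => (1 : ℝ)) μ :=
    hindep.comp measurable_snd measurable_snd
  simpa using setIntegral_inter_of_indepFun hmT hmS aestronglyMeasurable_const h1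

theorem setIntegral_inter_add_of_indepFun (hmT : MeasurableSet T) (hmS : MeasurableSet S)
    (hindep : IndepFun (fun ω => (A ω, T.indicator (fun _ => (1 : ℝ)) ω))
      (fun ω => (B ω, S.indicator (fun _ => (1 : ℝ)) ω)) μ)
    (hA : Integrable A μ) (hB : Integrable B μ) :
    ∫ ω in T ∩ S, (A ω + B ω) ∂μ
      = (∫ ω in T, A ω ∂μ) * μ.real S + μ.real T * ∫ ω in S, B ω ∂μ := by
  have hAS : IndepFun (T.indicator A) (S.indicator fun _ => (1 : ℝ)) μ := by
    convert hindep.comp (measurable_fst.mul measurable_snd) measurable_snd using 1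
    · funext ω
      by_cases hω : ω ∈ T <;> simp [hω]
    · rfl
  have hBT : IndepFun (S.indicator B) (T.indicator fun _ => (1 : ℝ)) μ := by
    convert hindep.symm.comp (measurable_fst.mul measurable_snd) measurable_snd using 1
    · funext ω
      by_cases hω : ω ∈ S <;> simp [hω]
    · rfl
  rw [integral_add hA.integrableOn hB.integrableOn,
    setIntegral_inter_of_indepFun hmT hmS hA.aestronglyMeasurable hAS, inter_comm,
    setIntegral_inter_of_indepFun hmS hmT hB.aestronglyMeasurable hBT, mul_comm (μ.real T)]

theorem setAverage_inter_add_of_indepFun [IsFiniteMeasure μ] (hmT : MeasurableSet T) (hmS : MeasurableSet S)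
    (hindep : IndepFun (fun ω => (A ω, T.indicator (fun _ => (1 : ℝ)) ω))
      (fun ω => (B ω, S.indicator (fun _ => (1 : ℝ)) ω)) μ)
    (hA : Integrable A μ) (hB : Integrable B μ)
    (hT : μ T ≠ 0) (hS : μ S ≠ 0) :
    ⨍ ω in T ∩ S, (A ω + B ω) ∂μ = (⨍ ω in T, A ω ∂μ) + ⨍ ω in S, B ω ∂μ := by
  have hT' : μ.real T ≠ 0 := (measureReal_ne_zero_iff).2 hT
  have hS' : μ.real S ≠ 0 := (measureReal_ne_zero_iff).2 hS
  simp only [setAverage_eq, smul_eq_mul,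
    setIntegral_inter_add_of_indepFun hmT hmS hindep hA hB,
    measureReal_inter_of_indepFun hmT hmS hindep]
  field_simp

end

/-- Disentanglement of the population impurity decrease: suppose the residual
decomposes as `r = A + B`, where the pair `(A, 1_T)` (the within-block part and the
indicator of the current leaf `T`, which constrains only block-1 features) is
independent of the pair `(B, 1_S)` (the block-2 part and the indicator of the
candidate split event `S = {x_m ≤ τ}` on a block-2 feature).  Then the impurity
decrease of splitting the leaf `T` by `S` factors as
`Δ(s, t, r) = π(T) · Δ(s', t₀, r)`, where `Δ(s', t₀, r)` is the impurity decrease of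
splitting a brand-new root node by `S`; in particular `Δ(s, t, r) ≤ Δ(s', t₀, r)`. -/
theorem disentanglement_impurity_factorization {Ω : Type*} [MeasurableSpace Ω]
    (μ : Measure Ω) [IsProbabilityMeasure μ]
    (T S : Set Ω) (hmT : MeasurableSet T) (hmS : MeasurableSet S)
    (hT : μ T ≠ 0) (hS : μ S ≠ 0) (hSc : μ Sᶜ ≠ 0)
    (A B r : Ω → ℝ) (hr : ∀ ω, r ω = A ω + B ω)
    (hAint : Integrable A μ) (hBint : Integrable B μ)
    (hindep : IndepFun (fun ω => (A ω, T.indicator (fun _ => (1 : ℝ)) ω))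
                       (fun ω => (B ω, S.indicator (fun _ => (1 : ℝ)) ω)) μ)
    (em : Set Ω → ℝ) (hem : ∀ E, em E = (∫ ω in E, r ω ∂μ) / (μ E).toReal)
    (ΔT Δ0 : ℝ)
    (hΔT : ΔT = ((μ (T ∩ S)).toReal * (μ (T ∩ Sᶜ)).toReal / (μ T).toReal)
              * (em (T ∩ S) - em (T ∩ Sᶜ)) ^ 2)
    (hΔ0 : Δ0 = (μ S).toReal * (μ Sᶜ).toReal * (em S - em Sᶜ) ^ 2) :
    ΔT = (μ T).toReal * Δ0 ∧ ΔT ≤ Δ0 := by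
  simp only [← measureReal_def] at hem hΔT hΔ0 ⊢
  have hem' (E : Set Ω) : em E = ⨍ ω in E, (A ω + B ω) ∂μ := by
    rw [hem, setAverage_eq, smul_eq_mul, inv_mul_eq_div, funext hr]
  have hindepc := hindep.indicator_compl_right
  have hroot := hindep.indicator_univ_left
  have hrootc := hroot.indicator_compl_right
  have hTS := setAverage_inter_add_of_indepFun hmT hmS hindep hAint hBint hT hS
  have hTSc := setAverage_inter_add_of_indepFun hmT hmS.compl hindepc hAint hBint hT hSc
  have hrootS := setAverage_inter_add_of_indepFun .univ hmS hroot hAint hBint (by simp) hS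
  have hrootSc := setAverage_inter_add_of_indepFun .univ hmS.compl hrootc hAint hBint (by simp) hSc
  rw [univ_inter] at hrootS hrootSc
  have hdiff : em (T ∩ S) - em (T ∩ Sᶜ) = em S - em Sᶜ := by
    rw [hem', hem', hem', hem', hTS, hTSc, hrootS, hrootSc]
    ring
  have hfactor : ΔT = μ.real T * Δ0 := by
    rw [hΔT, hΔ0, hdiff, measureReal_inter_of_indepFun hmT hmS hindep,
      measureReal_inter_of_indepFun hmT hmS.compl hindepc]
    field_simp
  exact ⟨hfactor, hfactor ▸ mul_le_of_le_one_left (by rw [hΔ0]; positivity) measureReal_le_one⟩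
end
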